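/- arXiv:1104.3237 — 3 statements merged into one kernel-verified Lean document; each statement's English description precedes it below -/
import Mathlib

section
/- For every a > 0 and every 0 ≤ ρ < 1 there exists a constant c = c(a, ρ) > 0 such that every probability measure ν on ℤ with m₁(ν) ≤ a and with ν(βℤ + r) ≤ ρ for every β ∈ ℤ with |β| ≠ 1 and every r ∈ ℤ satisfies |ν̂(t)| ≤ e^{−ct²} for all t ∈ (−1/2, 1/2]. -/
open scoped BigOperators
open Filter MeasureTheory

/-- A probability measure on `ℤ`, given as a nonnegative function summing to `1`. -/
def IsProbMeasure (ν : ℤ → ℝ) : Prop := (∀ k, 0 ≤ ν k) ∧ HasSum ν 1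

/-- The Fourier transform `ν̂(t) = ∑_{k ∈ ℤ} ν(k) e^{2πikt}`. -/
noncomputable def ft (ν : ℤ → ℝ) (t : ℝ) : ℂ :=
  ∑' k : ℤ, (ν k : ℂ) * Complex.exp (2 * Real.pi * Complex.I * (k : ℂ) * (t : ℂ))

/-- Convolution of two measures on `ℤ`. -/
noncomputable def conv (μ ν : ℤ → ℝ) (k : ℤ) : ℝ := ∑' j : ℤ, μ (k - j) * ν j

/-- `muN ν n = ν 0 ∗ ν 1 ∗ ⋯ ∗ ν n`. -/
noncomputable def muN (ν : ℕ → ℤ → ℝ) : ℕ → ℤ → ℝ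
  | 0 => ν 0
  | n + 1 => conv (muN ν n) (ν (n + 1))

/-- The expectation `E(ν) = ∑ k ν(k)`. -/
noncomputable def expectation (ν : ℤ → ℝ) : ℝ := ∑' k : ℤ, (k : ℝ) * ν k

/-- The second moment `m₂(ν)`. -/
noncomputable def m2 (ν : ℤ → ℝ) : ℝ := ∑' k : ℤ, |(k : ℝ)| ^ 2 * ν k

/-- The first moment `m₁(ν)`. -/
noncomputable def m1 (ν : ℤ → ℝ) : ℝ := ∑' k : ℤ, |(k : ℝ)| * ν k

/-- `ν` is strictly aperiodic: its support is not contained in any proper coset `r + βℤ`. -/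
def StrictlyAperiodic (ν : ℤ → ℝ) : Prop :=
  ∀ β r : ℤ, β.natAbs ≠ 1 → ∃ k : ℤ, ν k ≠ 0 ∧ ¬ β ∣ (k - r)

/-- The mass `ν(βℤ + r)` that `ν` gives to the coset `βℤ + r`. -/
noncomputable def cosetMass (ν : ℤ → ℝ) (β r : ℤ) : ℝ :=
  ∑' k : ℤ, if β ∣ (k - r) then ν k else 0


section Helpers
open Real

lemma sin_lb (x : ℝ) : 2 * |x - round x| ≤ |Real.sin (π * x)| := by
  set n := round x with hn
  have hy : |x - n| ≤ 1/2 := abs_sub_round x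
  have h1 : Real.sin (π * x) = (-1)^n * Real.sin (π * (x - n)) := by
    rw [← Real.sin_add_int_mul_pi (π * (x - n)) n]; ring_nf
  have habs1 : |((-1:ℝ))^n| = 1 := by
    rcases Int.even_or_odd n with h | h
    · rw [h.neg_one_zpow]; simp
    · rw [Odd.neg_one_zpow h]; simp
  have h2 : |Real.sin (π * x)| = |Real.sin (π * (x - n))| := by
    rw [h1, abs_mul, habs1, one_mul]
  have h3 : |Real.sin (π * (x - n))| = Real.sin (π * |x - n|) := by
    rcases abs_cases (x - (n:ℝ)) with ⟨h, _⟩ | ⟨h, hneg⟩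
    · rw [h]; exact abs_of_nonneg (Real.sin_nonneg_of_nonneg_of_le_pi
        (by positivity) (by nlinarith [Real.pi_pos, abs_le.1 hy]))
    · rw [h, mul_neg, Real.sin_neg]
      exact abs_of_nonpos (by
        have : Real.sin (-(π * (x - n))) ≥ 0 := Real.sin_nonneg_of_nonneg_of_le_pi
          (by nlinarith [Real.pi_pos]) (by nlinarith [Real.pi_pos, abs_le.1 hy])
        rw [Real.sin_neg] at this; linarith)
  rw [h2, h3]
  have := Real.mul_le_sin (x := π * |x - n|) (by positivity)
    (by nlinarith [Real.pi_pos])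
  calc 2 * |x - n| = 2/π * (π * |x - n|) := by field_simp
    _ ≤ _ := this

lemma two_exp_norm_sq (p q x y : ℝ) :
    ‖(p:ℂ) * Complex.exp ((x:ℝ) * Complex.I) + (q:ℂ) * Complex.exp ((y:ℝ) * Complex.I)‖^2
      = p^2 + q^2 + 2*p*q*Real.cos (x - y) := by
  have h : ‖(p:ℂ) * Complex.exp ((x:ℝ) * Complex.I) + (q:ℂ) * Complex.exp ((y:ℝ) * Complex.I)‖^2
      = Complex.normSq ((p:ℂ) * Complex.exp ((x:ℝ) * Complex.I) + (q:ℂ) * Complex.exp ((y:ℝ) * Complex.I)) := by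
    rw [Complex.sq_norm]
  rw [h, Complex.normSq_add]
  have h1 : ∀ r u : ℝ, Complex.normSq ((r:ℂ) * Complex.exp ((u:ℝ) * Complex.I)) = r^2 := by
    intro r u
    rw [Complex.normSq_mul, Complex.normSq_ofReal]
    have : Complex.normSq (Complex.exp ((u:ℝ) * Complex.I)) = 1 := by
      rw [Complex.normSq_eq_norm_sq, Complex.norm_exp_ofReal_mul_I]; norm_num
    rw [this]; ring
  rw [h1, h1]
  have h2 : ((p:ℂ) * Complex.exp ((x:ℝ) * Complex.I) *
      (starRingEnd ℂ) ((q:ℂ) * Complex.exp ((y:ℝ) * Complex.I))).re = p * q * Real.cos (x - y) := by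
    rw [map_mul, Complex.conj_ofReal, ← Complex.exp_conj]
    have : (starRingEnd ℂ) ((y:ℝ) * Complex.I) = -((y:ℝ) * Complex.I) := by
      rw [map_mul, Complex.conj_ofReal, Complex.conj_I]; ring
    rw [this]
    have : (p:ℂ) * Complex.exp ((x:ℝ) * Complex.I) * ((q:ℂ) * Complex.exp (-((y:ℝ) * Complex.I)))
        = ((p*q : ℝ):ℂ) * Complex.exp (((x - y : ℝ)) * Complex.I) := by
      rw [mul_mul_mul_comm, ← Complex.exp_add]; push_cast; ring_nf
    rw [this, Complex.re_ofReal_mul, Complex.exp_ofReal_mul_I_re]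
  rw [h2]; ring

private lemma exp_form (m : ℤ) (t : ℝ) :
    Complex.exp (2 * Real.pi * Complex.I * (m : ℂ) * (t : ℂ)) =
      Complex.exp ((2 * π * m * t : ℝ) * Complex.I) := by
  push_cast; ring_nf

lemma two_point (ν : ℤ → ℝ) (hν : IsProbMeasure ν) (t : ℝ) (j k : ℤ) (hjk : j ≠ k) :
    ‖ft ν t‖ ≤ 1 - 2 * ν j * ν k * Real.sin (π * ((j:ℝ) - (k:ℝ)) * t)^2 := by
  obtain ⟨hnn, hone⟩ := hν
  have hsum : Summable ν := hone.summable
  set f : ℤ → ℂ := fun l => (ν l : ℂ) * Complex.exp (2 * Real.pi * Complex.I * (l : ℂ) * (t : ℂ)) with hf_def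
  have hnorm : ∀ l, ‖f l‖ = ν l := by
    intro l
    rw [hf_def]
    simp only
    rw [exp_form, norm_mul, Complex.norm_exp_ofReal_mul_I, mul_one,
      Complex.norm_real, Real.norm_of_nonneg (hnn l)]
  have hf : Summable f := by
    apply Summable.of_norm
    simpa only [hnorm] using hsum
  set s : Finset ℤ := {j, k} with hs_def
  have hsplit := Summable.sum_add_tsum_compl (s := s) hf
  have hsplitν := Summable.sum_add_tsum_compl (s := s) hsum
  have hsumjk : ∑ l ∈ s, ν l = ν j + ν k := Finset.sum_pair hjk
  have hfjk : ∑ l ∈ s, f l = f j + f k := Finset.sum_pair hjk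
  have htail_nonneg : 0 ≤ ∑' (l : ↑((s:Set ℤ))ᶜ), ν l :=
    tsum_nonneg (fun l => hnn l)
  have hpq1 : ν j + ν k ≤ 1 := by
    have := hone.tsum_eq
    rw [← hsumjk]
    nlinarith [hsplitν, this, htail_nonneg]
  have htail : ‖∑' (l : ↑((s:Set ℤ))ᶜ), f l‖ ≤ 1 - (ν j + ν k) := by
    have h1 : ‖∑' (l : ↑((s:Set ℤ))ᶜ), f l‖ ≤ ∑' (l : ↑((s:Set ℤ))ᶜ), ν l := by
      have := norm_tsum_le_tsum_norm (f := fun l : ↑((s:Set ℤ))ᶜ => f l)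
        (by simp only [hnorm]; exact hsum.subtype _)
      simpa only [hnorm] using this
    have h2 : ∑' (l : ↑((s:Set ℤ))ᶜ), ν l = 1 - (ν j + ν k) := by
      rw [← hsumjk]; linarith [hsplitν, hone.tsum_eq]
    linarith
  set S := Real.sin (π * ((j:ℝ) - (k:ℝ)) * t) with hS_def
  have hSsq : S^2 ≤ 1 := by nlinarith [Real.neg_one_le_sin (π * ((j:ℝ) - (k:ℝ)) * t), Real.sin_le_one (π * ((j:ℝ) - (k:ℝ)) * t)]
  have hkey : ‖f j + f k‖ ≤ (ν j + ν k) - 2 * ν j * ν k * S^2 := by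
    have hcos : Real.cos ((2*π*(j:ℝ)*t) - (2*π*(k:ℝ)*t)) = 1 - 2 * S^2 := by
      have harg : (2*π*(j:ℝ)*t) - (2*π*(k:ℝ)*t) = 2 * (π * ((j:ℝ) - (k:ℝ)) * t) := by ring
      rw [harg, Real.cos_two_mul]
      nlinarith [Real.sin_sq_add_cos_sq (π * ((j:ℝ) - (k:ℝ)) * t)]
    have hnsq : ‖f j + f k‖^2 = (ν j + ν k)^2 - 4 * ν j * ν k * S^2 := by
      rw [hf_def]
      simp only
      rw [exp_form j t, exp_form k t, two_exp_norm_sq, hcos]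
      ring
    have hn0 : 0 ≤ ‖f j + f k‖ := norm_nonneg _
    have hb0 : 0 ≤ (ν j + ν k) - 2 * ν j * ν k * S^2 := by
      nlinarith [hnn j, hnn k, sq_nonneg S, sq_nonneg (ν j - ν k), sq_nonneg (ν j + ν k)]
    have hsq : ‖f j + f k‖^2 ≤ ((ν j + ν k) - 2 * ν j * ν k * S^2)^2 := by
      rw [hnsq]
      nlinarith [hpq1, mul_nonneg (mul_nonneg (hnn j) (hnn k)) (sq_nonneg S),
        sq_nonneg (ν j * ν k * S^2)]
    nlinarith [hsq, hn0, hb0]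
  calc ‖ft ν t‖ = ‖(f j + f k) + ∑' (l : ↑((s:Set ℤ))ᶜ), f l‖ := by
        rw [← hfjk]; rw [show ft ν t = ∑' l, f l from rfl, ← hsplit]
    _ ≤ ‖f j + f k‖ + ‖∑' (l : ↑((s:Set ℤ))ᶜ), f l‖ := norm_add_le _ _
    _ ≤ ((ν j + ν k) - 2 * ν j * ν k * S^2) + (1 - (ν j + ν k)) := add_le_add hkey htail
    _ = 1 - 2 * ν j * ν k * S^2 := by ring


lemma key_claim (K : ℕ) (hK : 1 ≤ K) (T : Finset ℤ) (hTS : ∀ j ∈ T, |j| ≤ (K:ℤ))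
    (hT : ∀ β r : ℤ, β.natAbs ≠ 1 → ∃ j ∈ T, ¬ β ∣ (j - r))
    (t : ℝ) (ht0 : t ≠ 0) (ht : |t| ≤ 1/2) :
    ∃ j ∈ T, ∃ k ∈ T,
      min (1/(8*(K:ℝ))) |t| ≤ |((j:ℝ) - (k:ℝ)) * t - round (((j:ℝ) - (k:ℝ)) * t)| := by
  set η : ℝ := 1/(8*(K:ℝ)) with hη_def
  have hK1 : (1:ℝ) ≤ K := by exact_mod_cast hK
  have hKpos : (0:ℝ) < K := by linarith
  have hηpos : 0 < η := by positivity
  have hη8 : η ≤ 1/8 := by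
    rw [hη_def, div_le_div_iff₀ (by positivity) (by norm_num)]; nlinarith
  set θ : ℝ := min η |t| with hθ_def
  have hθpos : 0 < θ := lt_min hηpos (abs_pos.2 ht0)
  have hθη : θ ≤ η := min_le_left _ _
  have hθt : θ ≤ |t| := min_le_right _ _
  by_contra hcon
  push_neg at hcon
  obtain ⟨j0, hj0T, -⟩ := hT 0 0 (by norm_num)
  have hpair : ∀ j ∈ T, |((j:ℝ) - j0) * t - round (((j:ℝ) - j0) * t)| < θ := by
    intro j hj; exact hcon j hj j0 hj0T
  by_cases hA : ∀ j ∈ T, round (((j:ℝ) - j0) * t) = 0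
  · have hTj0 : ∀ j ∈ T, j = j0 := by
      intro j hj
      have h1 := hpair j hj
      rw [hA j hj] at h1
      simp only [Int.cast_zero, sub_zero, abs_mul] at h1
      have h2 : |(j:ℝ) - j0| * |t| < 1 * |t| := lt_of_lt_of_le h1 (by rw [one_mul]; exact hθt)
      have h3 : |(j:ℝ) - j0| < 1 := lt_of_mul_lt_mul_right h2 (abs_nonneg t)
      have h4 : |j - j0| < 1 := by exact_mod_cast (by push_cast; exact h3 : |((j - j0 : ℤ):ℝ)| < 1)
      rw [abs_lt] at h4; omega
    obtain ⟨j, hjT, hjdvd⟩ := hT 0 j0 (by norm_num)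
    exact hjdvd (by rw [hTj0 j hjT]; simp)
  · push_neg at hA
    obtain ⟨j1, hj1T, hM⟩ := hA
    obtain ⟨hj1a, hj1b⟩ := abs_le.1 (hTS j1 hj1T)
    obtain ⟨hj0a, hj0b⟩ := abs_le.1 (hTS j0 hj0T)
    set D : ℤ := j1 - j0 with hD_def
    set M : ℤ := round (((j1:ℝ) - j0) * t) with hM_def
    have hDabs : |D| ≤ 2*(K:ℤ) := by rw [hD_def, abs_le]; omega
    have hDt : |((D:ℝ)) * t - M| < θ := by
      rw [hD_def, hM_def]; push_cast; exact hpair j1 hj1T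
    have hD0 : D ≠ 0 := by
      intro h
      rw [h] at hDt
      simp only [Int.cast_zero, zero_mul, zero_sub, abs_neg] at hDt
      have h1 : |(M:ℝ)| < 1 := lt_of_lt_of_le hDt (by nlinarith)
      have h2 : |M| < 1 := by exact_mod_cast h1
      rw [abs_lt] at h2; omega
    have hrel : ∀ j ∈ T, (j - j0) * M = round (((j:ℝ) - j0) * t) * D := by
      intro j hj
      obtain ⟨hja, hjb⟩ := abs_le.1 (hTS j hj)
      set dj : ℤ := j - j0 with hdj_def
      set mj : ℤ := round (((j:ℝ) - j0) * t) with hmj_def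
      have hdjabs : |dj| ≤ 2*(K:ℤ) := by rw [hdj_def, abs_le]; omega
      have hdjt : |((dj:ℝ)) * t - mj| < θ := by
        rw [hdj_def, hmj_def]; push_cast; exact hpair j hj
      have hval : |((dj * M - mj * D : ℤ) : ℝ)| < 1 := by
        have heq : ((dj * M - mj * D : ℤ) : ℝ)
            = (dj:ℝ) * ((M:ℝ) - (D:ℝ)*t) + (D:ℝ) * ((dj:ℝ)*t - mj) := by push_cast; ring
        have hb1 : |(dj:ℝ)| ≤ 2*(K:ℝ) := by exact_mod_cast hdjabs
        have hb2 : |(D:ℝ)| ≤ 2*(K:ℝ) := by exact_mod_cast hDabs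
        have h1 : |(M:ℝ) - (D:ℝ)*t| < θ := by rw [abs_sub_comm]; exact hDt
        calc |((dj * M - mj * D : ℤ) : ℝ)|
            ≤ |(dj:ℝ)| * |(M:ℝ) - (D:ℝ)*t| + |(D:ℝ)| * |(dj:ℝ)*t - mj| := by
              rw [heq]; refine (abs_add_le _ _).trans ?_; rw [abs_mul, abs_mul]
          _ < 2*(K:ℝ) * θ + 2*(K:ℝ) * θ := by
              apply add_lt_add_of_le_of_lt
              · exact mul_le_mul hb1 (le_of_lt h1) (abs_nonneg _) (by positivity)
              · exact mul_lt_mul' hb2 hdjt (abs_nonneg _) (by positivity)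
          _ ≤ 4*(K:ℝ) * η := by nlinarith
          _ < 1 := by rw [hη_def, mul_one_div, div_lt_one (by positivity)]; nlinarith
      have hlt : |dj * M - mj * D| < 1 := by exact_mod_cast hval
      have h0 : dj * M - mj * D = 0 := by rw [abs_lt] at hlt; omega
      have : dj * M = mj * D := by linarith
      rw [hdj_def, hmj_def] at this; exact this
    -- now pass to reduced fraction
    set g : ℕ := Int.gcd D M with hg_def
    have hgpos : 0 < g := Int.gcd_pos_of_ne_zero_left M hD0
    have hgD : (g:ℤ) ∣ D := Int.gcd_dvd_left _ _
    have hgM : (g:ℤ) ∣ M := Int.gcd_dvd_right _ _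
    set D1 : ℤ := D / (g:ℤ) with hD1_def
    set M1 : ℤ := M / (g:ℤ) with hM1_def
    have hgz : (g:ℤ) ≠ 0 := by exact_mod_cast hgpos.ne'
    have hDeq : D = D1 * g := by rw [hD1_def, Int.ediv_mul_cancel hgD]
    have hMeq : M = M1 * g := by rw [hM1_def, Int.ediv_mul_cancel hgM]
    have hco : Int.gcd D1 M1 = 1 := Int.gcd_div_gcd_div_gcd hgpos
    have hD10 : D1 ≠ 0 := by intro h; rw [h, zero_mul] at hDeq; exact hD0 hDeq
    have hM10 : M1 ≠ 0 := by intro h; rw [h, zero_mul] at hMeq; exact hM hMeq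
    have hdvd : ∀ j ∈ T, D1 ∣ (j - j0) := by
      intro j hj
      have h1 := hrel j hj
      rw [hDeq, hMeq] at h1
      have h2 : (j - j0) * M1 = round (((j:ℝ) - j0) * t) * D1 :=
        mul_right_cancel₀ hgz (by linarith [h1]; )
      have h3 : D1 ∣ (j - j0) * M1 := ⟨round (((j:ℝ) - j0) * t), by rw [h2]; ring⟩
      exact Int.dvd_of_dvd_mul_left_of_gcd_one h3 hco
    have hD1na : D1.natAbs ≠ 1 := by
      intro hna
      have hDdvdM : D ∣ M := by
        rcases Int.natAbs_eq_iff.1 hna with h | h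
        · rw [hDeq, hMeq, h]; simpa using Dvd.intro_left M1 rfl
        · rw [hDeq, hMeq, h]
          exact mul_dvd_mul ⟨-M1, by ring⟩ dvd_rfl
      have hDleM : |D| ≤ |M| := Int.le_of_dvd (abs_pos.2 hM) ((abs_dvd_abs D M).mpr hDdvdM)
      have hcast : (1:ℝ) ≤ |(D:ℝ)| := by exact_mod_cast Int.one_le_abs hD0
      have hMD : |(D:ℝ)| ≤ |(M:ℝ)| := by exact_mod_cast hDleM
      have htri := abs_sub_abs_le_abs_sub (M:ℝ) ((D:ℝ)*t)
      rw [abs_sub_comm] at htri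
      have hMb : |(M:ℝ)| ≤ |(D:ℝ)| * |t| + θ := by
        rw [← abs_mul]; linarith [hDt.le]
      nlinarith [abs_nonneg (D:ℝ), mul_le_mul_of_nonneg_left ht (abs_nonneg (D:ℝ))]
    obtain ⟨j, hjT, hjdvd⟩ := hT D1 j0 hD1na
    exact hjdvd (hdvd j hjT)

lemma final_calc (δ η t p q s F : ℝ) (hδ : 0 < δ) (hη : 0 < η) (hη8 : η ≤ 1/8)
    (ht0 : t ≠ 0) (htabs : |t| ≤ 1/2)
    (hp : δ ≤ p) (hq : δ ≤ q)
    (hsin : 2 * min η |t| ≤ |s|)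
    (hF : F ≤ 1 - 2*p*q*s^2) :
    F ≤ Real.exp (-(32*δ^2*η^2) * t^2) := by
  set θ := min η |t| with hθ_def
  have hθ0 : 0 < θ := lt_min hη (abs_pos.2 ht0)
  have hθt : 2*η*|t| ≤ θ := by
    rw [hθ_def]
    rcases le_total |t| η with h | h
    · rw [min_eq_right h]; nlinarith [abs_nonneg t]
    · rw [min_eq_left h]; nlinarith [abs_nonneg t, abs_pos.2 ht0]
  have hs2 : 4*θ^2 ≤ s^2 := by nlinarith [sq_abs s, abs_nonneg s, hsin, hθ0]
  have hθsq : 4*η^2*t^2 ≤ θ^2 := by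
    nlinarith [sq_abs t, abs_nonneg t, hθt, mul_pos hη (abs_pos.2 ht0)]
  have h1 : δ*δ ≤ p*q := mul_le_mul hp hq hδ.le (hδ.le.trans hp)
  have h2 : (δ*δ)*(4*θ^2) ≤ (p*q)*s^2 := mul_le_mul h1 hs2 (by positivity) (by nlinarith)
  have h3 : 32*δ^2*η^2*t^2 ≤ 2*(p*q)*s^2 := by nlinarith [h2, hθsq, mul_pos hδ hδ]
  have h4 := Real.add_one_le_exp (-(32*δ^2*η^2) * t^2)
  nlinarith [h3, hF, h4]


end Helpers


set_option maxHeartbeats 1000000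

/-- Theorem 3.3: for every `a > 0` and `0 ≤ ρ < 1` there is `c > 0` such
that every probability measure `ν` on `ℤ` with `m₁(ν) ≤ a` and mass at most `ρ` on every
proper coset of `ℤ` satisfies `|ν̂(t)| ≤ e^{-ct²}` for all `t ∈ (-1/2, 1/2]`. -/
theorem gaussian_bound_of_moment_and_coset
    (a ρ : ℝ) (ha : 0 < a) (hρ0 : 0 ≤ ρ) (hρ1 : ρ < 1) :
    ∃ c : ℝ, 0 < c ∧
      ∀ ν : ℤ → ℝ, IsProbMeasure ν →
        Summable (fun k : ℤ => |(k : ℝ)| * ν k) → m1 ν ≤ a →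
        (∀ β r : ℤ, β.natAbs ≠ 1 → cosetMass ν β r ≤ ρ) →
        ∀ t ∈ Set.Ioc (-(1 : ℝ) / 2) (1 / 2), ‖ft ν t‖ ≤ Real.exp (-c * t ^ 2) := by
  have hρ' : 0 < 1 - ρ := by linarith
  set K : ℕ := max ⌈4*a/(1-ρ)⌉₊ 1 with hK_def
  have hK1 : 1 ≤ K := le_max_right _ _
  have hKR : (1:ℝ) ≤ K := by exact_mod_cast hK1
  have hKpos : (0:ℝ) < K := by linarith
  have hKa : 4*a/(1-ρ) ≤ (K:ℝ) := by
    calc 4*a/(1-ρ) ≤ (⌈4*a/(1-ρ)⌉₊ : ℝ) := Nat.le_ceil _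
      _ ≤ (K:ℝ) := by exact_mod_cast Nat.le_max_left _ _
  set δ : ℝ := (1-ρ)/(2*(2*(K:ℝ)+1)) with hδ_def
  have hδpos : 0 < δ := by rw [hδ_def]; positivity
  set η : ℝ := 1/(8*(K:ℝ)) with hη_def
  have hηpos : 0 < η := by rw [hη_def]; positivity
  have hη8 : η ≤ 1/8 := by
    rw [hη_def, div_le_div_iff₀ (by positivity) (by norm_num)]; nlinarith
  refine ⟨32*δ^2*η^2, by positivity, ?_⟩
  intro ν hν hm1sum hm1a hcoset t ht
  obtain ⟨hnn, hone⟩ := hν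
  have hsum : Summable ν := hone.summable
  obtain ⟨ht1, ht2⟩ := ht
  have htabs : |t| ≤ 1/2 := abs_le.2 ⟨by linarith, ht2⟩
  -- trivial case t = 0
  rcases eq_or_ne t 0 with rfl | ht0
  · have h := two_point ν ⟨hnn, hone⟩ 0 0 1 (by norm_num)
    norm_num at h
    rw [show -(32*δ^2*η^2) * (0:ℝ) ^ 2 = 0 by ring, Real.exp_zero]
    exact h
  -- main case
  set S : Finset ℤ := Finset.Icc (-(K:ℤ)) (K:ℤ) with hS_def
  set T : Finset ℤ := S.filter (fun j => δ ≤ ν j) with hT_def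
  -- mass of S
  have hsplitν := Summable.sum_add_tsum_compl (s := S) hsum
  have hsplitm := Summable.sum_add_tsum_compl (s := S) hm1sum
  have htailm_nonneg : (0:ℝ) ≤ ∑ k ∈ S, |(k:ℝ)| * ν k :=
    Finset.sum_nonneg fun k _ => mul_nonneg (abs_nonneg _) (hnn k)
  have htailm : ∑' (x : ↑((S:Set ℤ))ᶜ), |((x:ℤ):ℝ)| * ν x ≤ a := by
    have := hsplitm
    have hm1 : ∑' k : ℤ, |(k:ℝ)| * ν k ≤ a := hm1a
    linarith
  have hplain : ∀ x : ℤ, x ∉ S → ν x ≤ (1/(K:ℝ)) * (|(x:ℝ)| * ν x) := by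
    intro x hx
    rw [hS_def, Finset.mem_Icc, not_and_or, not_le, not_le] at hx
    have hxK : (K:ℝ) ≤ |(x:ℝ)| := by
      have h1 : (K:ℤ) ≤ |x| := by
        rcases hx with h | h
        · rcases abs_cases x with ⟨he, _⟩ | ⟨he, _⟩ <;> omega
        · rcases abs_cases x with ⟨he, _⟩ | ⟨he, _⟩ <;> omega
      exact_mod_cast h1
    rw [← sub_nonneg]
    have h := hnn x
    have heq : (1/(K:ℝ)) * (|(x:ℝ)| * ν x) - ν x = (ν x) * (|(x:ℝ)| - K) / K := by
      field_simp
    rw [heq]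
    have : (0:ℝ) ≤ |(x:ℝ)| - K := by linarith
    positivity
  have hpt : ∀ x : ↑((S:Set ℤ))ᶜ, ν x ≤ (1/(K:ℝ)) * (|((x:ℤ):ℝ)| * ν x) :=
    fun x => hplain x.1 (fun hm => x.2 (Finset.mem_coe.mpr hm))
  have htail : ∑' (x : ↑((S:Set ℤ))ᶜ), ν x ≤ (1-ρ)/4 := by
    have h1 : ∑' (x : ↑((S:Set ℤ))ᶜ), ν x
        ≤ ∑' (x : ↑((S:Set ℤ))ᶜ), (1/(K:ℝ)) * (|((x:ℤ):ℝ)| * ν x) := by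
      apply Summable.tsum_le_tsum hpt (hsum.subtype _)
      exact (hm1sum.subtype _).mul_left _
    have h2 : ∑' (x : ↑((S:Set ℤ))ᶜ), (1/(K:ℝ)) * (|((x:ℤ):ℝ)| * ν x)
        = (1/(K:ℝ)) * ∑' (x : ↑((S:Set ℤ))ᶜ), |((x:ℤ):ℝ)| * ν x := tsum_mul_left
    have h3 : (1/(K:ℝ)) * ∑' (x : ↑((S:Set ℤ))ᶜ), |((x:ℤ):ℝ)| * ν x ≤ (1/(K:ℝ)) * a := by
      apply mul_le_mul_of_nonneg_left htailm (by positivity)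
    have h4 : (1/(K:ℝ)) * a ≤ (1-ρ)/4 := by
      rw [div_mul_eq_mul_div, one_mul, div_le_div_iff₀ hKpos (by norm_num)]
      rw [div_le_iff₀ hρ'] at hKa
      nlinarith
    linarith
  have hmassS : (3+ρ)/4 ≤ ∑ k ∈ S, ν k := by
    have h1 : ∑' k, ν k = 1 := hone.tsum_eq
    linarith [hsplitν, htail]
  -- mass of T
  have hcardS : (S.card : ℝ) = 2*(K:ℝ)+1 := by
    rw [hS_def, Int.card_Icc]
    have : ((K:ℤ) + 1 - -(K:ℤ)).toNat = 2*K+1 := by omega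
    rw [this]; push_cast; ring
  have hmassT : ρ + (1-ρ)/4 ≤ ∑ j ∈ T, ν j := by
    have hsplit := Finset.sum_filter_add_sum_filter_not S (fun j => δ ≤ ν j) ν
    have hb : ∑ j ∈ S.filter (fun j => ¬ δ ≤ ν j), ν j ≤ (S.card : ℝ) * δ := by
      calc ∑ j ∈ S.filter (fun j => ¬ δ ≤ ν j), ν j
          ≤ (S.filter (fun j => ¬ δ ≤ ν j)).card • δ := by
            apply Finset.sum_le_card_nsmul
            intro x hx
            exact le_of_lt (not_le.1 (Finset.mem_filter.1 hx).2)
        _ = ((S.filter (fun j => ¬ δ ≤ ν j)).card : ℝ) * δ := nsmul_eq_mul _ _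
        _ ≤ (S.card : ℝ) * δ := by
            apply mul_le_mul_of_nonneg_right _ hδpos.le
            exact_mod_cast Finset.card_filter_le _ _
    have hcδ : (S.card : ℝ) * δ = (1-ρ)/2 := by
      rw [hcardS, hδ_def]; field_simp
    nlinarith [hsplit, hb, hmassS]
  -- T not contained in a proper coset
  have hTcoset : ∀ β r : ℤ, β.natAbs ≠ 1 → ∃ j ∈ T, ¬ β ∣ (j - r) := by
    intro β r hβ
    by_contra hall
    push_neg at hall
    have hsub : ∑ j ∈ T, ν j ≤ cosetMass ν β r := by
      have heq : ∑ j ∈ T, ν j = ∑ j ∈ T, (if β ∣ (j - r) then ν j else 0) := by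
        apply Finset.sum_congr rfl
        intro j hj; rw [if_pos (hall j hj)]
      rw [heq, cosetMass]
      apply Summable.sum_le_tsum T
      · intro k _; split <;> [exact hnn k; exact le_refl 0]
      · apply Summable.of_nonneg_of_le _ _ hsum
        · intro k; split <;> [exact hnn k; exact le_refl 0]
        · intro k; split <;> [exact le_refl _; exact hnn k]
    have := hcoset β r hβ
    nlinarith [hmassT]
  have hTS : ∀ j ∈ T, |j| ≤ (K:ℤ) := by
    intro j hj
    have := (Finset.mem_filter.1 hj).1
    rw [hS_def, Finset.mem_Icc] at this
    rw [abs_le]; exact this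
  have hTδ : ∀ j ∈ T, δ ≤ ν j := fun j hj => (Finset.mem_filter.1 hj).2
  -- apply the key claim
  obtain ⟨j, hjT, k, hkT, hjk_ineq⟩ := key_claim K hK1 T hTS hTcoset t ht0 htabs
  have hθpos : 0 < min η |t| := lt_min hηpos (abs_pos.2 ht0)
  have hjk : j ≠ k := by
    intro h
    rw [h] at hjk_ineq
    simp only [sub_self, zero_mul, round_zero, Int.cast_zero, sub_zero, abs_zero] at hjk_ineq
    linarith
  have hsin : 2 * min η |t| ≤ |Real.sin (Real.pi * ((j:ℝ) - (k:ℝ)) * t)| := by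
    have h := sin_lb (((j:ℝ) - (k:ℝ)) * t)
    have harg : Real.pi * (((j:ℝ) - (k:ℝ)) * t) = Real.pi * ((j:ℝ) - (k:ℝ)) * t := by ring
    rw [harg] at h
    linarith [hjk_ineq]
  exact final_calc δ η t (ν j) (ν k) _ _ hδpos hηpos hη8 ht0 htabs
    (hTδ j hjT) (hTδ k hkT) hsin (two_point ν ⟨hnn, hone⟩ t j k hjk)
end

section
/- Let (ν_n) be probability measures on ℤ of the form ν_n = a_n δ_{x_n} + (1 − a_n) γ_n, where 0 ≤ a_n ≤ 1, x_n ∈ ℤ, each γ_n is a probability measure on ℤ, the partial sums ∑_{n=1}^N x_n tend to +∞ (or to −∞) as N → ∞, and ∑_n (1 − a_n) < ∞. Then the sequence μ_N = ν_1∗⋯∗ν_N is dissipative, i.e. lim_{N→∞} μ_N(k) = 0 for every k ∈ ℤ. -/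
open scoped BigOperators
open Filter MeasureTheory

lemma probMeasure_le_one {μ : ℤ → ℝ} (hμ : IsProbMeasure μ) (k : ℤ) : μ k ≤ 1 :=
  le_hasSum hμ.2 k (fun j _ => hμ.1 j)

lemma conv_isProbMeasure {μ ν : ℤ → ℝ} (hμ : IsProbMeasure μ) (hν : IsProbMeasure ν) :
    IsProbMeasure (conv μ ν) := by
  set F : ℤ × ℤ → ℝ := fun p => μ (p.2 - p.1) * ν p.1 with hFdef
  have hμs : Summable μ := hμ.2.summable
  have hνs : Summable ν := hν.2.summable
  have hfix : ∀ j : ℤ, HasSum (fun k => F (j, k)) (ν j) := by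
    intro j
    have h1 : HasSum (fun k : ℤ => μ (k - j)) 1 :=
      (Equiv.subRight j).hasSum_iff.mpr hμ.2
    simpa using h1.mul_right (ν j)
  have hFsum : Summable F := by
    rw [summable_prod_of_nonneg (fun p => mul_nonneg (hμ.1 _) (hν.1 _))]
    refine ⟨fun j => (hfix j).summable, ?_⟩
    have : (fun j : ℤ => ∑' k, F (j, k)) = ν := funext fun j => (hfix j).tsum_eq
    rw [this]; exact hνs
  have hF1 : HasSum F 1 := by
    rw [hFsum.hasSum_iff]
    rw [Summable.tsum_prod' hFsum (fun j => (hfix j).summable)]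
    calc ∑' (j) (k), F (j, k) = ∑' j, ν j := by
            congr 1; exact funext fun j => (hfix j).tsum_eq
      _ = 1 := hν.2.tsum_eq
  have hswap : HasSum (fun p : ℤ × ℤ => F (p.2, p.1)) 1 :=
    (Equiv.prodComm ℤ ℤ).hasSum_iff.mpr hF1
  constructor
  · intro k; exact tsum_nonneg fun j => mul_nonneg (hμ.1 _) (hν.1 _)
  · refine HasSum.prod_fiberwise hswap (fun k => ?_)
    have hs : Summable fun j => μ (k - j) * ν j := by
      refine Summable.of_nonneg_of_le (fun j => mul_nonneg (hμ.1 _) (hν.1 _))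
        (fun j => ?_) hνs
      exact mul_le_of_le_one_left (hν.1 j) (probMeasure_le_one hμ _)
    exact hs.hasSum

lemma conv_step {μ γ : ℤ → ℝ} {aa : ℝ} {xx : ℤ} (hμ : IsProbMeasure μ)
    (hγ : IsProbMeasure γ) (ha1 : aa ≤ 1) (k : ℤ) :
    conv μ (fun j => (if j = xx then aa else 0) + (1 - aa) * γ j) k
      ≤ μ (k - xx) + (1 - aa) := by
  have hγs : Summable γ := hγ.2.summable
  have h1 : ∀ j : ℤ, μ (k - j) * ((if j = xx then aa else 0) + (1 - aa) * γ j)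
      = (if j = xx then μ (k - xx) * aa else 0) + (1 - aa) * (μ (k - j) * γ j) := by
    intro j
    by_cases hj : j = xx <;> simp [hj] <;> ring
  have hs1 : HasSum (fun j : ℤ => if j = xx then μ (k - xx) * aa else 0) (μ (k - xx) * aa) :=
    hasSum_ite_eq xx _
  have hs2 : Summable fun j => (1 - aa) * (μ (k - j) * γ j) := by
    refine Summable.of_nonneg_of_le
      (fun j => mul_nonneg (by linarith) (mul_nonneg (hμ.1 _) (hγ.1 _)))
      (fun j => ?_) (hγs.mul_left (1 - aa))
    exact mul_le_mul_of_nonneg_left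
      (mul_le_of_le_one_left (hγ.1 j) (probMeasure_le_one hμ _)) (by linarith)
  have hle : ∑' j, μ (k - j) * γ j ≤ 1 := by
    have hs : Summable fun j => μ (k - j) * γ j := by
      refine Summable.of_nonneg_of_le (fun j => mul_nonneg (hμ.1 _) (hγ.1 _))
        (fun j => mul_le_of_le_one_left (hγ.1 j) (probMeasure_le_one hμ _)) hγs
    calc ∑' j, μ (k - j) * γ j ≤ ∑' j, γ j :=
          Summable.tsum_le_tsum (fun j => mul_le_of_le_one_left (hγ.1 j) (probMeasure_le_one hμ _)) hs hγs
      _ = 1 := hγ.2.tsum_eq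
  calc conv μ (fun j => (if j = xx then aa else 0) + (1 - aa) * γ j) k
      = ∑' j, ((if j = xx then μ (k - xx) * aa else 0) + (1 - aa) * (μ (k - j) * γ j)) := by
        unfold conv; exact tsum_congr h1
    _ = μ (k - xx) * aa + (1 - aa) * ∑' j, μ (k - j) * γ j := by
        rw [Summable.tsum_add hs1.summable hs2, hs1.tsum_eq, tsum_mul_left]
    _ ≤ μ (k - xx) * 1 + (1 - aa) * 1 := by
        have h0 := hμ.1 (k - xx)
        have : (1 - aa) * ∑' j, μ (k - j) * γ j ≤ (1 - aa) * 1 :=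
          mul_le_mul_of_nonneg_left hle (by linarith)
        nlinarith
    _ = μ (k - xx) + (1 - aa) := by ring

set_option maxHeartbeats 1000000 in
/-- Theorem 4.2.1: if `ν_n = a_n δ_{x_n} + (1 - a_n) γ_n` with
`0 ≤ a_n ≤ 1`, the partial sums `∑ x_n` tend to `+∞` (or `-∞`), and `∑ (1 - a_n) < ∞`,
then `μ_N = ν_0 ∗ ⋯ ∗ ν_N` is dissipative: `μ_N(k) → 0` for every `k`. -/
theorem conv_dissipative
    (ν γ : ℕ → ℤ → ℝ) (a : ℕ → ℝ) (x : ℕ → ℤ)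
    (ha : ∀ n, 0 ≤ a n ∧ a n ≤ 1)
    (hγ : ∀ n, IsProbMeasure (γ n))
    (hν : ∀ n k, ν n k = (if k = x n then a n else 0) + (1 - a n) * γ n k)
    (hx : Filter.Tendsto (fun N => ∑ n ∈ Finset.range (N + 1), x n) Filter.atTop
            Filter.atTop ∨
          Filter.Tendsto (fun N => ∑ n ∈ Finset.range (N + 1), x n) Filter.atTop
            Filter.atBot)
    (hsum : Summable fun n => 1 - a n) :
    ∀ k : ℤ, Filter.Tendsto (fun N => muN ν N k) Filter.atTop (nhds 0) := by
  -- each ν n is a probability measure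
  have hνfun : ∀ n, ν n = fun j => (if j = x n then a n else 0) + (1 - a n) * γ n j :=
    fun n => funext (hν n)
  have hνp : ∀ n, IsProbMeasure (ν n) := by
    intro n
    rw [hνfun n]
    constructor
    · intro j
      have h1 := (ha n).1; have h2 := (ha n).2
      by_cases hj : j = x n
      · have h3 := (hγ n).1 (x n); simp [hj]; nlinarith
      · have h3 := (hγ n).1 j; simp [hj]; nlinarith
    · have h1 : HasSum (fun j : ℤ => if j = x n then a n else 0) (a n) := hasSum_ite_eq _ _
      have h2 : HasSum (fun j : ℤ => (1 - a n) * γ n j) ((1 - a n) * 1) :=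
        (hγ n).2.mul_left _
      simpa using h1.add h2
  have hμNp : ∀ N, IsProbMeasure (muN ν N) := by
    intro N
    induction N with
    | zero => exact hνp 0
    | succ n ih => exact conv_isProbMeasure ih (hνp (n + 1))
  -- the key inductive bound
  have bound : ∀ M N, M ≤ N → ∀ k : ℤ,
      muN ν N k ≤ muN ν M (k - ∑ n ∈ Finset.Ico (M + 1) (N + 1), x n)
        + ∑ n ∈ Finset.Ico (M + 1) (N + 1), (1 - a n) := by
    intro M
    refine Nat.le_induction ?_ ?_
    · intro k; simp
    · intro N hMN ih k
      have hstep : muN ν (N + 1) k ≤ muN ν N (k - x (N + 1)) + (1 - a (N + 1)) := by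
        show conv (muN ν N) (ν (N + 1)) k ≤ _
        rw [hνfun (N + 1)]
        exact conv_step (hμNp N) (hγ (N + 1)) (ha (N + 1)).2 k
      have hIco : M + 1 ≤ N + 1 := Nat.succ_le_succ hMN
      have e1 : ∑ n ∈ Finset.Ico (M + 1) (N + 1 + 1), x n
          = (∑ n ∈ Finset.Ico (M + 1) (N + 1), x n) + x (N + 1) :=
        Finset.sum_Ico_succ_top hIco _
      have e2 : ∑ n ∈ Finset.Ico (M + 1) (N + 1 + 1), (1 - a n)
          = (∑ n ∈ Finset.Ico (M + 1) (N + 1), (1 - a n)) + (1 - a (N + 1)) :=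
        Finset.sum_Ico_succ_top hIco _
      have := ih (k - x (N + 1))
      rw [e1, e2]
      have e3 : k - x (N + 1) - ∑ n ∈ Finset.Ico (M + 1) (N + 1), x n
          = k - ((∑ n ∈ Finset.Ico (M + 1) (N + 1), x n) + x (N + 1)) := by ring
      rw [e3] at this
      linarith
  intro k
  rw [Metric.tendsto_atTop]
  intro ε hε
  -- choose M with small tail
  have hnn : ∀ n, 0 ≤ 1 - a n := fun n => by have := (ha n).2; linarith
  have htail : Tendsto (fun M => ∑' i : ℕ, (1 - a (i + M))) atTop (nhds 0) := by
    have heq : ∀ M : ℕ, ∑' i : ℕ, (1 - a (i + M))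
        = (∑' i, (1 - a i)) - ∑ i ∈ Finset.range M, (1 - a i) := by
      intro M
      have := Summable.sum_add_tsum_nat_add (f := fun n => 1 - a n) M hsum
      linarith
    simp only [heq]
    have h1 : Tendsto (fun M => ∑ i ∈ Finset.range M, (1 - a i)) atTop
        (nhds (∑' i, (1 - a i))) := hsum.hasSum.tendsto_sum_nat
    simpa using (tendsto_const_nhds (x := ∑' i, (1 - a i))).sub h1
  obtain ⟨M, hM⟩ := (Metric.tendsto_atTop.mp htail) (ε / 2) (half_pos hε)
  have htailM : ∑' i : ℕ, (1 - a (i + (M + 1))) < ε / 2 := by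
    have := hM (M + 1) (Nat.le_succ M)
    rwa [Real.dist_eq, sub_zero, abs_of_nonneg (tsum_nonneg fun i => hnn _)] at this
  have hsumM : Summable fun i : ℕ => 1 - a (i + (M + 1)) :=
    (summable_nat_add_iff (M + 1)).2 hsum
  have htb : ∀ N, (∑ n ∈ Finset.Ico (M + 1) (N + 1), (1 - a n)) < ε / 2 := by
    intro N
    calc ∑ n ∈ Finset.Ico (M + 1) (N + 1), (1 - a n)
        = ∑ i ∈ Finset.range (N + 1 - (M + 1)), (1 - a (i + (M + 1))) := by
          rw [Finset.sum_Ico_eq_sum_range]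
          exact Finset.sum_congr rfl fun i _ => by rw [add_comm]
      _ ≤ ∑' i : ℕ, (1 - a (i + (M + 1))) :=
          Summable.sum_le_tsum _ (fun i _ => hnn _) hsumM
      _ < ε / 2 := htailM
  -- T N tends to ±∞
  set T : ℕ → ℤ := fun N => ∑ n ∈ Finset.Ico (M + 1) (N + 1), x n with hT
  have hTeq : ∀ N, M ≤ N → T N = (∑ n ∈ Finset.range (N + 1), x n)
      - ∑ n ∈ Finset.range (M + 1), x n := by
    intro N hMN
    exact Finset.sum_Ico_eq_sub _ (Nat.succ_le_succ hMN)
  have hcof : Tendsto (fun N => k - T N) atTop (cofinite : Filter ℤ) := by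
    have hcongr : (fun N => k - ((∑ n ∈ Finset.range (N + 1), x n)
        - ∑ n ∈ Finset.range (M + 1), x n)) =ᶠ[atTop] (fun N => k - T N) := by
      filter_upwards [eventually_ge_atTop M] with N hN
      rw [hTeq N hN]
    rcases hx with hS | hS
    · have h1 : Tendsto (fun N => k - ((∑ n ∈ Finset.range (N + 1), x n)
          - ∑ n ∈ Finset.range (M + 1), x n)) atTop atBot := by
        apply tendsto_atBot_add_const_left
        apply tendsto_neg_atTop_atBot.comp
        exact tendsto_atTop_add_const_right _ _ hS
      exact ((h1.congr' hcongr).mono_right (Int.cofinite_eq ▸ le_sup_left))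
    · have h1 : Tendsto (fun N => k - ((∑ n ∈ Finset.range (N + 1), x n)
          - ∑ n ∈ Finset.range (M + 1), x n)) atTop atTop := by
        apply tendsto_atTop_add_const_left
        apply tendsto_neg_atBot_atTop.comp
        exact tendsto_atBot_add_const_right _ _ hS
      exact ((h1.congr' hcongr).mono_right (Int.cofinite_eq ▸ le_sup_right))
  have hz : Tendsto (fun N => muN ν M (k - T N)) atTop (nhds 0) :=
    ((hμNp M).2.summable.tendsto_cofinite_zero).comp hcof
  obtain ⟨N₁, hN₁⟩ := (Metric.tendsto_atTop.mp hz) (ε / 2) (half_pos hε)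
  refine ⟨max M N₁, fun N hN => ?_⟩
  have hNM : M ≤ N := le_trans (le_max_left _ _) hN
  have hNN₁ : N₁ ≤ N := le_trans (le_max_right _ _) hN
  have h1 : muN ν M (k - T N) < ε / 2 := by
    have := hN₁ N hNN₁
    rw [Real.dist_eq, sub_zero] at this
    exact lt_of_le_of_lt (le_abs_self _) this
  have h2 := bound M N hNM k
  have h3 : 0 ≤ muN ν N k := (hμNp N).1 k
  rw [Real.dist_eq, sub_zero, abs_of_nonneg h3]
  have := htb N
  calc muN ν N k ≤ _ := h2
    _ < ε / 2 + ε / 2 := by apply add_lt_add h1 (htb N)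
    _ = ε := by ring
end

section
/- Let ν = a δ_x + (1 − a) γ be a probability measure on ℤ, where 0 ≤ a < 1, x ∈ ℤ, γ is a probability measure on ℤ with finite first moment, E(ν) = 0, |x| ≥ c, and a ≥ d for constants c, d > 0. Then m₂(ν) ≥ α/(1 − a), where α = dc². -/
open scoped BigOperators
open Filter MeasureTheory

/-- Lemma 4.2.3: if `ν = a δ_x + (1 - a) γ` with `0 ≤ a < 1`,
`E(ν) = 0`, `|x| ≥ c` and `a ≥ d` for constants `c, d > 0`, then
`m₂(ν) ≥ α / (1 - a)` where `α = d c²` (the second moment being possibly infinite,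
the inequality is stated in `ℝ≥0∞`). -/
theorem second_moment_lower_bound
    (ν γ : ℤ → ℝ) (a : ℝ) (x : ℤ) (c d : ℝ)
    (ha0 : 0 ≤ a) (ha1 : a < 1)
    (hγ : IsProbMeasure γ)
    (hγ1 : Summable fun k : ℤ => |(k : ℝ)| * γ k)
    (hν : ∀ k, ν k = (if k = x then a else 0) + (1 - a) * γ k)
    (hc : 0 < c) (hd : 0 < d)
    (hx : c ≤ |(x : ℝ)|) (had : d ≤ a)
    (hE : expectation ν = 0) :
    ENNReal.ofReal (d * c ^ 2 / (1 - a)) ≤ ∑' k : ℤ, ENNReal.ofReal (|(k : ℝ)| ^ 2 * ν k) := by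
  have h1a : (0:ℝ) < 1 - a := by linarith
  have hγ0 := hγ.1
  have hγsum : Summable γ := hγ.2.summable
  have hγtot : ∑' k : ℤ, γ k = 1 := hγ.2.tsum_eq
  have hν2 : ∀ k : ℤ, |(k:ℝ)|^2 * ν k
      = (if k = x then |(x:ℝ)|^2 * a else 0) + (1-a) * (|(k:ℝ)|^2 * γ k) := by
    intro k
    rw [hν k]
    by_cases h : k = x
    · subst h; simp; ring
    · simp [h]; ring
  have hνnonneg : ∀ k, 0 ≤ ν k := by
    intro k; rw [hν k]
    have h2 := hγ0 k
    have h3 : (0:ℝ) ≤ if k = x then a else 0 := by split <;> simp [ha0]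
    nlinarith
  have sIte2 : Summable fun k : ℤ => if k = x then |(x:ℝ)|^2 * a else 0 :=
    (hasSum_ite_eq x _).summable
  by_cases hS2 : Summable fun k : ℤ => |(k:ℝ)|^2 * γ k
  · -- finite second moment of γ
    have sν2 : Summable fun k : ℤ => |(k:ℝ)|^2 * ν k := by
      refine (sIte2.add (hS2.mul_left (1-a))).congr fun k => (hν2 k).symm
    set S2 : ℝ := ∑' k : ℤ, |(k:ℝ)|^2 * γ k with hS2def
    set M1 : ℝ := ∑' k : ℤ, |(k:ℝ)| * γ k with hM1def
    set Eg : ℝ := ∑' k : ℤ, (k:ℝ) * γ k with hEgdef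
    have sKγ : Summable fun k : ℤ => (k:ℝ) * γ k := by
      rw [← summable_abs_iff]
      refine hγ1.congr fun k => ?_
      rw [abs_mul, abs_of_nonneg (hγ0 k)]
    have hν1 : ∀ k : ℤ, (k:ℝ) * ν k
        = (if k = x then (x:ℝ)*a else 0) + (1-a) * ((k:ℝ) * γ k) := by
      intro k
      rw [hν k]
      by_cases h : k = x
      · subst h; simp; ring
      · simp [h]; ring
    have sIte1 : Summable fun k : ℤ => if k = x then (x:ℝ)*a else 0 :=
      (hasSum_ite_eq x _).summable
    have hEν : (x:ℝ)*a + (1-a)*Eg = 0 := by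
      rw [← hE]; unfold expectation
      rw [show (fun k : ℤ => (k:ℝ) * ν k)
          = fun k : ℤ => (if k = x then (x:ℝ)*a else 0) + (1-a) * ((k:ℝ) * γ k)
          from funext hν1]
      rw [Summable.tsum_add sIte1 (sKγ.mul_left _), tsum_ite_eq, tsum_mul_left]
    have hEgM1 : |Eg| ≤ M1 := by
      have h := norm_tsum_le_tsum_norm (f := fun k : ℤ => (k:ℝ) * γ k)
        (by refine hγ1.congr fun k => ?_;
            simp [Real.norm_eq_abs, abs_mul, abs_of_nonneg (hγ0 k)])
      simp only [Real.norm_eq_abs] at h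
      calc |Eg| ≤ ∑' k : ℤ, |(k:ℝ) * γ k| := h
        _ = M1 := by
            refine tsum_congr fun k => ?_
            rw [abs_mul, abs_of_nonneg (hγ0 k)]
    have hM1S2 : M1^2 ≤ S2 := by
      have hpt : ∀ k : ℤ, 2*M1*( |(k:ℝ)| * γ k) - M1^2 * γ k ≤ |(k:ℝ)|^2 * γ k := by
        intro k
        nlinarith [mul_nonneg (hγ0 k) (sq_nonneg (|(k:ℝ)| - M1))]
      have h := Summable.tsum_le_tsum hpt ((hγ1.mul_left (2*M1)).sub (hγsum.mul_left (M1^2))) hS2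
      rw [Summable.tsum_sub (hγ1.mul_left (2*M1)) (hγsum.mul_left (M1^2)),
        tsum_mul_left, tsum_mul_left, hγtot] at h
      nlinarith [h]
    have hEgS2 : Eg^2 ≤ S2 := by
      nlinarith [hEgM1, abs_nonneg Eg, sq_abs Eg]
    have hT : (∑' k : ℤ, |(k:ℝ)|^2 * ν k) = |(x:ℝ)|^2 * a + (1-a) * S2 := by
      rw [show (fun k : ℤ => |(k:ℝ)|^2 * ν k)
          = fun k : ℤ => (if k = x then |(x:ℝ)|^2*a else 0) + (1-a) * (|(k:ℝ)|^2 * γ k)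
          from funext hν2]
      rw [Summable.tsum_add sIte2 (hS2.mul_left _), tsum_ite_eq, tsum_mul_left]
    rw [← ENNReal.ofReal_tsum_of_nonneg (fun k => mul_nonneg (by positivity) (hνnonneg k)) sν2, hT]
    apply ENNReal.ofReal_le_ofReal
    rw [div_le_iff₀ h1a]
    have h3 : (1-a)*Eg = -(a*(x:ℝ)) := by linarith
    have h4 : (1-a)^2 * Eg^2 = a^2*(x:ℝ)^2 := by rw [← mul_pow, h3]; ring
    have h5 : a^2*(x:ℝ)^2 ≤ (1-a)^2 * S2 := by
      nlinarith [mul_le_mul_of_nonneg_left hEgS2 (sq_nonneg (1-a))]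
    have hdc : d*c^2 ≤ a*|(x:ℝ)|^2 := by
      have hcx : c*c ≤ |(x:ℝ)| * |(x:ℝ)| := mul_self_le_mul_self hc.le hx
      nlinarith [abs_nonneg (x:ℝ)]
    have hxx : |(x:ℝ)|^2 = (x:ℝ)^2 := sq_abs _
    nlinarith [h5, hdc, sq_abs (x:ℝ)]
  · -- infinite second moment
    have htop : (∑' k : ℤ, ENNReal.ofReal (|(k:ℝ)|^2 * ν k)) = ⊤ := by
      by_contra h
      have hsum := ENNReal.summable_toReal h
      have hsum' : Summable fun k : ℤ => |(k:ℝ)|^2 * ν k := by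
        refine hsum.congr fun k => ?_
        rw [ENNReal.toReal_ofReal (mul_nonneg (by positivity) (hνnonneg k))]
      apply hS2
      refine Summable.of_nonneg_of_le (fun k => mul_nonneg (by positivity) (hγ0 k)) (fun k => ?_)
        (hsum'.mul_left (1/(1-a)))
      rw [hν2 k]
      have h3 : (0:ℝ) ≤ if k = x then |(x:ℝ)|^2*a else 0 := by
        split <;> positivity
      rw [one_div, ← div_eq_inv_mul, le_div_iff₀ h1a]
      nlinarith
    rw [htop]
    exact le_top
end
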